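/- Let M be a finite-dimensional vector space over a field k containing a subfield C, with a fixed basis; call a vector 'constant' if its coordinates lie in C. Let W ⊆ M be a d-dimensional subspace and suppose w ∈ Λᵈ W is a nonzero vector whose coordinates in the induced basis of Λᵈ M are all in C. Then W admits a basis of constant vectors. (Proof idea: W is the kernel of the C-coefficient linear map v ↦ w ∧ v : M → Λ^{d+1} M, and the kernel of a matrix with entries in C has a basis of vectors with entries in C.) -/

import Mathlib

open Matrix

/-- if a `d`-dimensional subspace `W` of `kⁿ` has a nonzero wedge
`w ∈ ΛᵈW` whose coordinates (i.e., the `d×d` minors / Plücker coordinates of a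
basis of `W`) all lie in the subfield `C`, then `W` admits a basis of constant
vectors. -/
theorem constant_basis_of_constant_wedge
    (k : Type*) [Field k] (C : Subfield k)
    (n dd : ℕ) (W : Submodule k (Fin n → k))
    (hdim : Module.finrank k W = dd)
    (b : Module.Basis (Fin dd) k W)
    -- the coordinates of the wedge w = b₁ ∧ ⋯ ∧ b_d in the induced basis of
    -- Λᵈ(kⁿ) are the d×d minors of the matrix of the bⱼ; they all lie in C:
    (hminors : ∀ f : Fin dd → Fin n,
      (Matrix.of fun i j => (b j : Fin n → k) (f i)).det ∈ C) :
    ∃ b' : Module.Basis (Fin dd) k W, ∀ i j, (b' i : Fin n → k) j ∈ C := by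
  classical
  -- the matrix whose rows are the basis vectors b j (as vectors of kⁿ)
  set Mt : Matrix (Fin dd) (Fin n) k := Matrix.of fun j m => (b j : Fin n → k) m with hMt
  -- rows of Mt are linearly independent
  have hli : LinearIndependent k (fun j => Mt j) := by
    have : (fun j => Mt j) = (W.subtype : W →ₗ[k] (Fin n → k)) ∘ b := rfl
    rw [this]
    exact b.linearIndependent.map' W.subtype (Submodule.ker_subtype W)
  have hrank : Mt.rank = dd := by
    simpa using hli.rank_matrix
  -- hence the columns of Mt span all of kᵈ
  have hspan : Submodule.span k (Set.range Mtᵀ) = ⊤ := by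
    apply Submodule.eq_top_of_finrank_eq
    have := Mt.rank_eq_finrank_span_cols
    rw [hrank] at this
    change dd = Module.finrank k (Submodule.span k (Set.range Mtᵀ)) at this
    rw [← this, Module.finrank_pi]
    simp
  -- choose a linearly independent spanning subset of the columns
  obtain ⟨t, hts, htspan, htli⟩ := exists_linearIndependent k (Set.range Mtᵀ)
  rw [hspan] at htspan
  have bt : Module.Basis t k (Fin dd → k) :=
    Module.Basis.mk htli (by rw [Subtype.range_coe, htspan])
  haveI : Fintype t := FiniteDimensional.fintypeBasisIndex bt
  have hcardt : Fintype.card t = dd := by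
    have := Module.finrank_eq_card_basis bt
    rw [Module.finrank_pi] at this
    simpa using this.symm
  let e : Fin dd ≃ t := (Fintype.equivFinOfCardEq hcardt).symm
  have hex : ∀ i : Fin dd, ∃ m : Fin n, Mtᵀ m = ((e i : _) : Fin dd → k) :=
    fun i => hts (e i).2
  choose f hf using hex
  -- the matrix A of the selected d×d minor
  set A : Matrix (Fin dd) (Fin dd) k :=
    Matrix.of fun i j => (b j : Fin n → k) (f i) with hA
  have hrowsA : ∀ i, A i = ((e i : _) : Fin dd → k) := by
    intro i
    have := hf i
    ext j
    have : Mtᵀ (f i) j = ((e i : _) : Fin dd → k) j := by rw [hf i]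
    simpa [Matrix.transpose_apply, hMt, hA] using this
  -- A has linearly independent rows, hence is invertible
  have hliA : LinearIndependent k (fun i => A i) := by
    have : (fun i => A i) = fun i => ((e i : _) : Fin dd → k) := funext hrowsA
    rw [this]
    exact htli.comp e e.injective
  have hAunit : IsUnit A := Matrix.linearIndependent_rows_iff_isUnit.mp hliA
  have hdetA : IsUnit A.det := (Matrix.isUnit_iff_isUnit_det A).mp hAunit
  have hdetA0 : A.det ≠ 0 := hdetA.ne_zero
  have hdetAC : A.det ∈ C := hminors f
  -- invertibility of A⁻¹
  have hdetAinv : IsUnit (A⁻¹).det := by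
    rw [Matrix.det_nonsing_inv, Ring.inverse_eq_inv']
    exact (isUnit_iff_ne_zero).mpr (inv_ne_zero hdetA0)
  -- the new basis
  refine ⟨b.map ((A⁻¹).toLinearEquiv b hdetAinv), ?_⟩
  intro i m
  have hb' : ((b.map ((A⁻¹).toLinearEquiv b hdetAinv)) i : Fin n → k) m
      = ∑ l, A⁻¹ l i * (b l : Fin n → k) m := by
    rw [Module.Basis.map_apply, Matrix.toLinearEquiv_apply, Matrix.toLin_self]
    push_cast
    simp [Finset.sum_apply]
  rw [hb']
  set c : Fin dd → k := fun l => (b l : Fin n → k) m with hc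
  -- the key determinant identity: ∑ l, adj(A) l i * c l = det (A.updateRow i c)
  have hadj : ∑ l, A.adjugate l i * c l = (A.updateRow i c).det := by
    have h1 : ∑ l, A.adjugate l i * c l = (Aᵀ.adjugate *ᵥ c) i := by
      rw [← Matrix.adjugate_transpose]
      simp [Matrix.mulVec, dotProduct, Matrix.transpose_apply]
    rw [h1, ← Matrix.cramer_eq_adjugate_mulVec, Matrix.cramer_apply,
      Matrix.updateCol_transpose, Matrix.det_transpose]
  -- the updated matrix is again a matrix of minors
  have hupdate : (A.updateRow i c).det ∈ C := by
    have : A.updateRow i c = Matrix.of fun r j => (b j : Fin n → k) (Function.update f i m r) := by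
      ext r j
      rcases eq_or_ne r i with rfl | hr
      · simp [Matrix.updateRow_apply, hc]
      · simp [Matrix.updateRow_apply, hr, Function.update_apply, hA]
    rw [this]
    exact hminors _
  -- conclude
  have hinv : ∀ l, A⁻¹ l i = A.det⁻¹ * A.adjugate l i := by
    intro l
    rw [Matrix.inv_def, Ring.inverse_eq_inv']
    simp [Matrix.smul_apply, smul_eq_mul]
  have key : (∑ l, A⁻¹ l i * (b l : Fin n → k) m)
      = A.det⁻¹ * ∑ l, A.adjugate l i * c l := by
    rw [Finset.mul_sum]
    refine Finset.sum_congr rfl fun l _ => ?_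
    rw [hinv l, hc, mul_assoc]
  rw [key, hadj]
  exact C.mul_mem (C.inv_mem hdetAC) hupdate
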